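/- The A-homotopy fundamental group of the 5-cycle is infinite cyclic: the map n ↦ [γₙ] is a group isomorphism from (ℤ, +) onto (B₁(C₅,[0])/∼, ·). -/

import Mathlib

/-- A graph homomorphism in the A-homotopy sense: adjacent vertices map to
equal or adjacent vertices. -/
def IsGraphHom {V W : Type*} (G : SimpleGraph V) (H : SimpleGraph W) (f : V → W) : Prop :=
  ∀ ⦃u v : V⦄, G.Adj u v → f u = f v ∨ H.Adj (f u) (f v)

/-- The infinite path graph `I_∞` on `ℤ`. -/
def pathGraphZ : SimpleGraph ℤ where
  Adj i j := i ≠ j ∧ (j = i + 1 ∨ i = j + 1)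
  symm := ⟨fun i j h => ⟨h.1.symm, h.2.symm⟩⟩
  loopless := ⟨fun i h => h.1 rfl⟩

/-- The Cartesian (box) product `I_∞ □ I_∞` on `ℤ × ℤ`. -/
def gridGraphZ : SimpleGraph (ℤ × ℤ) where
  Adj p q := p ≠ q ∧ ((p.1 = q.1 ∧ pathGraphZ.Adj p.2 q.2) ∨ (p.2 = q.2 ∧ pathGraphZ.Adj p.1 q.1))
  symm := ⟨fun p q h =>
    ⟨h.1.symm, h.2.imp (fun hc => ⟨hc.1.symm, hc.2.symm⟩) (fun hc => ⟨hc.1.symm, hc.2.symm⟩)⟩⟩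
  loopless := ⟨fun p h => h.1 rfl⟩

/-- The Cartesian product `G □ I_∞` on `V × ℤ`. -/
def boxZ {V : Type*} (G : SimpleGraph V) : SimpleGraph (V × ℤ) where
  Adj p q := p ≠ q ∧ ((p.1 = q.1 ∧ pathGraphZ.Adj p.2 q.2) ∨ (p.2 = q.2 ∧ G.Adj p.1 q.1))
  symm := ⟨fun p q h =>
    ⟨h.1.symm, h.2.imp (fun hc => ⟨hc.1.symm, hc.2.symm⟩) (fun hc => ⟨hc.1.symm, hc.2.symm⟩)⟩⟩
  loopless := ⟨fun p h => h.1 rfl⟩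

/-- The cycle graph `C_n` on `ZMod n`. -/
def cycleGraph (n : ℕ) : SimpleGraph (ZMod n) where
  Adj a b := a ≠ b ∧ (a = b + 1 ∨ b = a + 1)
  symm := ⟨fun a b h => ⟨h.1.symm, h.2.symm⟩⟩
  loopless := ⟨fun a h => h.1 rfl⟩

/-- The one-vertex graph `*`. -/
def oneVertexGraph : SimpleGraph Unit := ⊥

/-- `f` is constant on integers `≤ m`. -/
def IsStabNegAt {V : Type*} (f : ℤ → V) (m : ℤ) : Prop := ∀ i ≤ m, f i = f m

/-- `f` is constant on integers `≥ m`. -/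
def IsStabPosAt {V : Type*} (f : ℤ → V) (m : ℤ) : Prop := ∀ i, m ≤ i → f i = f m

/-- `m` is the greatest integer below which `f` is constant: `m = m₀(f,-1)`. -/
def M0Neg {V : Type*} (f : ℤ → V) (m : ℤ) : Prop :=
  IsStabNegAt f m ∧ ∀ m', IsStabNegAt f m' → m' ≤ m

/-- `m` is the least integer above which `f` is constant: `m = m₀(f,+1)`. -/
def M0Pos {V : Type*} (f : ℤ → V) (m : ℤ) : Prop :=
  IsStabPosAt f m ∧ ∀ m', IsStabPosAt f m' → m ≤ m'

/-- A stable graph homomorphism `I_∞ → G`. -/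
def StableHomZ {V : Type*} (G : SimpleGraph V) (f : ℤ → V) : Prop :=
  IsGraphHom pathGraphZ G f ∧ (∃ m, IsStabNegAt f m) ∧ (∃ m, IsStabPosAt f m)

/-- The A-homotopy relation of Babson et al. on stable maps `I_∞ → G`:
`f` and `g` share their end values `vneg`, `vpos`, and there is a stable graph
homomorphism `H : I_∞² → G` stabilizing in the first axis to the constant end
values and to `f` (resp. `g`) in the negative (resp. positive) second direction. -/
def AHomotopicZ {V : Type*} (G : SimpleGraph V) (f g : ℤ → V) : Prop :=
  ∃ (vneg vpos : V) (H : ℤ × ℤ → V), IsGraphHom gridGraphZ G H ∧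
    (∃ m, ∀ i ≤ m, f i = vneg ∧ g i = vneg) ∧
    (∃ m, ∀ i, m ≤ i → f i = vpos ∧ g i = vpos) ∧
    (∃ m, ∀ a ≤ m, ∀ j : ℤ, H (a, j) = vneg) ∧
    (∃ m, ∀ a, m ≤ a → ∀ j : ℤ, H (a, j) = vpos) ∧
    (∃ m, ∀ j ≤ m, ∀ a : ℤ, H (a, j) = f a) ∧
    (∃ m, ∀ j, m ≤ j → ∀ a : ℤ, H (a, j) = g a)

/-- A-homotopy of graph homomorphisms `G → H` via a finite cylinder `G □ I_n`
(encoded as a homotopy on `G □ I_∞` that is constantly `f` for times `≤ 0` and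
constantly `g` for times `≥ n`). -/
def AHomotopicFin {V W : Type*} (G : SimpleGraph V) (H : SimpleGraph W) (f g : V → W) : Prop :=
  ∃ (n : ℕ) (Φ : V × ℤ → W), IsGraphHom (boxZ G) H Φ ∧
    (∀ v : V, ∀ i ≤ (0 : ℤ), Φ (v, i) = f v) ∧
    (∀ v : V, ∀ i : ℤ, (n : ℤ) ≤ i → Φ (v, i) = g v)

/-- Based A-homotopy: as `AHomotopicFin`, additionally fixing the base vertex
`v0 ↦ w0` at all times. -/
def AHomotopicBased {V W : Type*} (G : SimpleGraph V) (H : SimpleGraph W)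
    (v0 : V) (w0 : W) (f g : V → W) : Prop :=
  ∃ (n : ℕ) (Φ : V × ℤ → W), IsGraphHom (boxZ G) H Φ ∧
    (∀ v : V, ∀ i ≤ (0 : ℤ), Φ (v, i) = f v) ∧
    (∀ v : V, ∀ i : ℤ, (n : ℤ) ≤ i → Φ (v, i) = g v) ∧
    (∀ i : ℤ, Φ (v0, i) = w0)

/-- Concatenation `f · g`, where `mf = m₀(f,-1)` and `mg = m₀(g,+1)`. -/
def concatZ {V : Type*} (f g : ℤ → V) (mf mg : ℤ) : ℤ → V :=
  fun a => if 0 ≤ a then f (a + mf) else g (a + mg)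

/-- The closed neighborhood `N[v]`. -/
def nbhd {V : Type*} (G : SimpleGraph V) (v : V) : Set V := {u | u = v ∨ G.Adj u v}

/-- A covering graph map: a surjective local isomorphism. -/
def IsCoveringMap' {V W : Type*} (Gt : SimpleGraph V) (G : SimpleGraph W) (p : V → W) : Prop :=
  IsGraphHom Gt G p ∧ Function.Surjective p ∧
    ∀ w : V, Set.BijOn p (nbhd Gt w) (nbhd G (p w))

/-- A based loop in `B₁(G, x₀)`: a graph homomorphism `I_∞ → G` equal to `x₀`
outside a finite region. -/
def IsLoopAt {V : Type*} (G : SimpleGraph V) (x0 : V) (γ : ℤ → V) : Prop :=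
  IsGraphHom pathGraphZ G γ ∧ ∃ a b : ℤ, ∀ i : ℤ, (i < a ∨ b < i) → γ i = x0

/-- The 5-cycle. -/
def C5 : SimpleGraph (ZMod 5) := cycleGraph 5

/-- The covering map `p₅ : I_∞ → C₅`, reduction mod 5. -/
def p5 : ℤ → ZMod 5 := fun i => (i : ZMod 5)

/-- The standard loop `γ_n` winding `n` times around `C₅`. -/
def gammaC5 (n : ℤ) : ℤ → ZMod 5 := fun i =>
  if 0 ≤ n then (if i ≤ 0 then 0 else if i ≤ 5 * n then (i : ZMod 5) else 0)
  else (if i ≤ 0 then 0 else if i ≤ -(5 * n) then ((-i : ℤ) : ZMod 5) else 0)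

/-- The standard lift `γ̃_n : I_∞ → I_∞` of `γ_n`, starting at `0` and ending at `5n`. -/
def gammaLift (n : ℤ) : ℤ → ℤ := fun i =>
  if i ≤ 0 then 0 else if i ≤ 5 * |n| then (if 0 ≤ n then i else -i) else 5 * n

/-!
Reduction mod `n` makes `I_∞` a covering of `C_n`: paths in `C_n` lift to paths in `I_∞`, and a
loop at `0` lifts to a path from `0` to some `n k`. Two paths in `I_∞` with the same constant tails
are A-homotopic by a clamped straight-line homotopy, which projects to `C_n`; this gives
surjectivity (compare the lift with that of `γ_k`) and the group law (the concatenation of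
`γ_n` and `γ_m` lifts to a path from `0` to `5 (n + m)`). For `n ≥ 5` an A-homotopy lifts row by
row, adjacent rows lifting to paths at distance at most one, so the end `n k` of the lift is a
homotopy invariant; this gives injectivity.
-/

open Filter

section GraphHom

variable {U V W : Type*} {G : SimpleGraph U} {H : SimpleGraph V} {K : SimpleGraph W}

lemma IsGraphHom.comp {g : V → W} {f : U → V} (hg : IsGraphHom H K g) (hf : IsGraphHom G H f) :
    IsGraphHom G K (g ∘ f) := by
  intro u v huv
  rcases hf huv with h | h
  · exact Or.inl (congrArg g h)
  · exact hg h

lemma pathGraphZ_adj_add_one (a : ℤ) : pathGraphZ.Adj a (a + 1) := ⟨by omega, Or.inl rfl⟩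

lemma isGraphHom_pathGraphZ_iff {f : ℤ → V} :
    IsGraphHom pathGraphZ H f ↔ ∀ a, f a = f (a + 1) ∨ H.Adj (f a) (f (a + 1)) := by
  refine ⟨fun hf a => hf (pathGraphZ_adj_add_one a), fun hf u v ⟨_, huv⟩ => ?_⟩
  rcases huv with rfl | rfl
  · exact hf u
  · exact (hf v).imp Eq.symm H.adj_symm

lemma isGraphHom_gridGraphZ_iff {f : ℤ × ℤ → V} :
    IsGraphHom gridGraphZ H f ↔ ∀ a t,
      (f (a, t) = f (a + 1, t) ∨ H.Adj (f (a, t)) (f (a + 1, t))) ∧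
      (f (a, t) = f (a, t + 1) ∨ H.Adj (f (a, t)) (f (a, t + 1))) := by
  refine ⟨fun hf a t => ⟨hf ⟨by simp, Or.inr ⟨rfl, pathGraphZ_adj_add_one a⟩⟩,
    hf ⟨by simp, Or.inl ⟨rfl, pathGraphZ_adj_add_one t⟩⟩⟩, fun hf => ?_⟩
  rintro ⟨a, t⟩ ⟨b, s⟩ ⟨-, ⟨hab, -, hts⟩ | ⟨hts, -, hab⟩⟩ <;> dsimp only at hab hts
  · subst hab
    obtain rfl | rfl := hts
    · exact (hf a t).2
    · exact (hf a s).2.imp Eq.symm H.adj_symm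
  · subst hts
    obtain rfl | rfl := hab
    · exact (hf a t).1
    · exact (hf b t).1.imp Eq.symm H.adj_symm

lemma pathGraphZ_eq_or_adj_iff {x y : ℤ} :
    x = y ∨ pathGraphZ.Adj x y ↔ x ≤ y + 1 ∧ y ≤ x + 1 := by
  simp only [pathGraphZ]
  omega

lemma isGraphHom_pathGraphZ_pathGraphZ_iff {F : ℤ → ℤ} :
    IsGraphHom pathGraphZ pathGraphZ F ↔ ∀ a, F a ≤ F (a + 1) + 1 ∧ F (a + 1) ≤ F a + 1 := by
  simp only [isGraphHom_pathGraphZ_iff, pathGraphZ_eq_or_adj_iff]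

lemma IsGraphHom.abs_sub_le {F : ℤ → ℤ} (hF : IsGraphHom pathGraphZ pathGraphZ F) {x y : ℤ}
    (hxy : x ≤ y) : |F y - F x| ≤ y - x := by
  induction y, hxy using Int.leInduction with
  | base => simp
  | succ y _ ih =>
    have := isGraphHom_pathGraphZ_pathGraphZ_iff.1 hF y
    rw [abs_le] at ih ⊢
    omega

lemma IsGraphHom.concatZ {f g : ℤ → V} (hf : IsGraphHom pathGraphZ H f)
    (hg : IsGraphHom pathGraphZ H g) {mf mg : ℤ} (h : f mf = g mg) :
    IsGraphHom pathGraphZ H (concatZ f g mf mg) := by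
  rw [isGraphHom_pathGraphZ_iff] at hf hg ⊢
  intro a
  simp only [_root_.concatZ]
  split_ifs with ha ha'
  · rw [show a + 1 + mf = a + mf + 1 by ring]
    exact hf _
  · omega
  · rw [show a = -1 by omega, show -1 + 1 + mf = mf by ring, h]
    simpa using hg (-1 + mg)
  · rw [show a + 1 + mg = a + mg + 1 by ring]
    exact hg _

lemma comp_concatZ (p : V → W) (f g : ℤ → V) (mf mg : ℤ) :
    p ∘ concatZ f g mf mg = concatZ (p ∘ f) (p ∘ g) mf mg :=
  funext fun _ => apply_ite p _ _ _

lemma AHomotopicZ.map {p : V → W} (hp : IsGraphHom H K p) {f g : ℤ → V}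
    (h : AHomotopicZ H f g) : AHomotopicZ K (p ∘ f) (p ∘ g) := by
  obtain ⟨u, v, Φ, hΦ, ⟨m₁, h₁⟩, ⟨m₂, h₂⟩, ⟨m₃, h₃⟩, ⟨m₄, h₄⟩, ⟨m₅, h₅⟩, ⟨m₆, h₆⟩⟩ := h
  refine ⟨p u, p v, p ∘ Φ, hp.comp hΦ, ⟨m₁, fun i hi => ?_⟩, ⟨m₂, fun i hi => ?_⟩,
    ⟨m₃, fun a ha t => ?_⟩, ⟨m₄, fun a ha t => ?_⟩, ⟨m₅, fun t ht a => ?_⟩,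
    ⟨m₆, fun t ht a => ?_⟩⟩ <;> simp [*]

end GraphHom

theorem aHomotopicZ_pathGraphZ {F G : ℤ → ℤ} (hF : IsGraphHom pathGraphZ pathGraphZ F)
    (hG : IsGraphHom pathGraphZ pathGraphZ G) {u v : ℤ}
    (hbot : ∀ᶠ a in atBot, F a = u ∧ G a = u) (htop : ∀ᶠ a in atTop, F a = v ∧ G a = v) :
    AHomotopicZ pathGraphZ F G := by
  obtain ⟨A, hA⟩ := eventually_atBot.1 hbot
  obtain ⟨B, hB⟩ := eventually_atTop.1 htop
  have hB' : ∀ a, max A B ≤ a → F a = v ∧ G a = v := fun a ha => hB a (le_of_max_le_right ha)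
  set T := 2 * (max A B - A) with hT
  have hFG : ∀ a, |F a - G a| ≤ T := by
    intro a
    rcases le_or_gt a A with h | h
    · simp only [hA a h, sub_self, abs_zero]
      omega
    rcases le_or_gt (max A B) a with h' | h'
    · simp only [hB' a h', sub_self, abs_zero]
      omega
    have hFa := hF.abs_sub_le h.le
    have hGa := hG.abs_sub_le h.le
    have := hA A le_rfl
    rw [abs_le] at hFa hGa ⊢
    omega
  -- At time `t` the path `F` is pushed towards `G` by `min t T`, never past `G`.
  set Φ : ℤ × ℤ → ℤ := fun p =>
    max (F p.1 - max 0 (min p.2 T)) (min (G p.1) (F p.1 + max 0 (min p.2 T)))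
  refine ⟨u, v, Φ, ?_, ⟨A, hA⟩, ⟨max A B, hB'⟩, ⟨A, fun a ha t => ?_⟩,
    ⟨max A B, fun a ha t => ?_⟩, ⟨0, fun t ht a => ?_⟩, ⟨T, fun t ht a => ?_⟩⟩
  · refine isGraphHom_gridGraphZ_iff.2 fun a t => ⟨?_, ?_⟩ <;>
      rw [pathGraphZ_eq_or_adj_iff] <;> simp only [Φ]
    · have := isGraphHom_pathGraphZ_pathGraphZ_iff.1 hF a
      have := isGraphHom_pathGraphZ_pathGraphZ_iff.1 hG a
      omega
    · omega
  all_goals simp only [Φ]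
  · have := hA a ha
    omega
  · have := hB' a ha
    omega
  all_goals
    have := abs_le.1 (hFG a)
    omega

section Cycle

variable {n : ℕ}

lemma isGraphHom_intCast_cycleGraph :
    IsGraphHom pathGraphZ (cycleGraph n) (Int.cast : ℤ → ZMod n) := by
  refine isGraphHom_pathGraphZ_iff.2 fun a => ?_
  push_cast
  by_cases h : (a : ZMod n) = a + 1
  · exact Or.inl h
  · exact Or.inr ⟨h, Or.inr rfl⟩

lemma eq_of_intCast_eq {x y : ℤ} (h : (x : ZMod n) = y) (hxy : |x - y| < n) : x = y := by
  rw [ZMod.intCast_eq_intCast_iff_dvd_sub] at h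
  exact (sub_eq_zero.1 (Int.eq_zero_of_abs_lt_dvd h (by rwa [abs_sub_comm]))).symm

def cycleStep (x y : ZMod n) : ℤ := if y = x + 1 then 1 else if x = y + 1 then -1 else 0

lemma abs_cycleStep_le (x y : ZMod n) : |cycleStep x y| ≤ 1 := by
  unfold cycleStep
  split_ifs <;> simp

lemma intCast_cycleStep {x y : ZMod n} (h : x = y ∨ (cycleGraph n).Adj x y) :
    (cycleStep x y : ZMod n) = y - x := by
  unfold cycleStep
  split_ifs with h₁ h₂
  · simp [h₁]
  · simp [h₂]
  · rcases h with rfl | ⟨-, h | h⟩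
    · simp
    · exact absurd h h₂
    · exact absurd h h₁

lemma exists_eq_add_of_succ (d : ℤ → ℤ) (A c : ℤ) :
    ∃ F : ℤ → ℤ, F A = c ∧ ∀ a, F (a + 1) = F a + d a := by
  refine ⟨fun a => c + ∑ i ∈ Finset.Ico A a, d i - ∑ i ∈ Finset.Ico a A, d i, by simp,
    fun a => ?_⟩
  dsimp only
  rcases le_or_gt A a with h | h
  · have h₁ : Finset.Ico A (a + 1) = insert a (Finset.Ico A a) := by
      ext; simp only [Finset.mem_Ico, Finset.mem_insert]; omega
    rw [h₁, Finset.sum_insert (by simp), Finset.Ico_eq_empty_of_le (by omega : A ≤ a + 1),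
      Finset.Ico_eq_empty_of_le h]
    ring
  · have h₁ : Finset.Ico a A = insert a (Finset.Ico (a + 1) A) := by
      ext; simp only [Finset.mem_Ico, Finset.mem_insert]; omega
    rw [h₁, Finset.sum_insert (by simp), Finset.Ico_eq_empty_of_le (by omega : a + 1 ≤ A),
      Finset.Ico_eq_empty_of_le h.le]
    ring

lemma IsGraphHom.exists_lift {f : ℤ → ZMod n} (hf : IsGraphHom pathGraphZ (cycleGraph n) f)
    {A c : ℤ} (hc : (c : ZMod n) = f A) :
    ∃ F : ℤ → ℤ, IsGraphHom pathGraphZ pathGraphZ F ∧ F A = c ∧ Int.cast ∘ F = f := by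
  obtain ⟨F, hFA, hF⟩ := exists_eq_add_of_succ (fun a => cycleStep (f a) (f (a + 1))) A c
  have hstep : ∀ a, ((F (a + 1) : ℤ) : ZMod n) = F a + (f (a + 1) - f a) := fun a => by
    rw [hF, Int.cast_add, intCast_cycleStep (isGraphHom_pathGraphZ_iff.1 hf a)]
  refine ⟨F, isGraphHom_pathGraphZ_pathGraphZ_iff.2 fun a => ?_, hFA, funext fun a => ?_⟩
  · have := abs_cycleStep_le (f a) (f (a + 1))
    rw [hF, abs_le] at *
    omega
  induction a using Int.inductionOn' (b := A) with
  | zero => simp [hFA, hc]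
  | succ k _ ih =>
    simp only [Function.comp_apply] at ih ⊢
    rw [hstep, ih, add_sub_cancel]
  | pred k _ ih =>
    have := hstep (k - 1)
    simp only [sub_add_cancel, Function.comp_apply] at this ih ⊢
    rw [ih] at this
    linear_combination -this

lemma isStabPosAt_of_intCast (hn : 2 ≤ n) {F : ℤ → ℤ} (hF : IsGraphHom pathGraphZ pathGraphZ F)
    {m : ℤ} (h : IsStabPosAt (Int.cast ∘ F : ℤ → ZMod n) m) : IsStabPosAt F m := by
  intro i hi
  induction i, hi using Int.leInduction with
  | base => rfl
  | succ k hk ih =>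
    have := isGraphHom_pathGraphZ_pathGraphZ_iff.1 hF k
    refine (eq_of_intCast_eq (n := n) ?_ ?_).trans ih
    · exact (h (k + 1) (by omega)).trans (h k hk).symm
    · rw [abs_lt]
      omega

lemma isStabNegAt_of_intCast (hn : 2 ≤ n) {F : ℤ → ℤ} (hF : IsGraphHom pathGraphZ pathGraphZ F)
    {m : ℤ} (h : IsStabNegAt (Int.cast ∘ F : ℤ → ZMod n) m) : IsStabNegAt F m := by
  intro i hi
  induction i, hi using Int.leInductionDown with
  | base => rfl
  | pred k hk ih =>
    have := isGraphHom_pathGraphZ_pathGraphZ_iff.1 hF (k - 1)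
    rw [sub_add_cancel] at this
    refine (eq_of_intCast_eq (n := n) ?_ ?_).trans ih
    · exact (h (k - 1) (by omega)).trans (h k hk).symm
    · rw [abs_lt]
      omega

lemma IsLoopAt.exists_lift (hn : 2 ≤ n) {f : ℤ → ZMod n} (hf : IsLoopAt (cycleGraph n) 0 f) :
    ∃ (F : ℤ → ℤ) (k : ℤ), IsGraphHom pathGraphZ pathGraphZ F ∧ Int.cast ∘ F = f ∧
      (∀ᶠ a in atBot, F a = 0) ∧ ∀ᶠ a in atTop, F a = n * k := by
  obtain ⟨hhom, a, b, hab⟩ := hf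
  have hlo : ∀ i ≤ a - 1, f i = 0 := fun i hi => hab i (Or.inl (by omega))
  have hhi : ∀ i, b + 1 ≤ i → f i = 0 := fun i hi => hab i (Or.inr (by omega))
  obtain ⟨F, hF, hFa, rfl⟩ := hhom.exists_lift (A := a - 1) (c := 0) (by simp [hlo])
  have hneg : IsStabNegAt F (a - 1) :=
    isStabNegAt_of_intCast hn hF fun i hi => (hlo i hi).trans (hlo _ le_rfl).symm
  have hpos : IsStabPosAt F (b + 1) :=
    isStabPosAt_of_intCast hn hF fun i hi => (hhi i hi).trans (hhi _ le_rfl).symm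
  obtain ⟨k, hk⟩ : (n : ℤ) ∣ F (b + 1) :=
    (ZMod.intCast_zmod_eq_zero_iff_dvd _ _).1 (hhi _ le_rfl)
  exact ⟨F, k, hF, rfl, eventually_atBot.2 ⟨a - 1, fun i hi => (hneg i hi).trans hFa⟩,
    eventually_atTop.2 ⟨b + 1, fun i hi => (hpos i hi).trans hk⟩⟩

lemma abs_sub_le_one_of_eq_or_adj (hn : 5 ≤ n) {x y : ℤ} (hxy : |x - y| ≤ 3)
    (h : (x : ZMod n) = y ∨ (cycleGraph n).Adj x y) : |x - y| ≤ 1 := by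
  have hstep := abs_cycleStep_le (x : ZMod n) y
  -- `x + cycleStep x y` and `y` are congruent mod `n` and at most `4 < n` apart.
  have hy : ((x + cycleStep (x : ZMod n) y : ℤ) : ZMod n) = y := by
    rw [Int.cast_add, intCast_cycleStep h, add_sub_cancel]
  have := eq_of_intCast_eq hy (by rw [abs_le] at *; rw [abs_lt]; omega)
  rw [abs_le] at *
  omega

lemma abs_sub_le_one_of_lifts (hn : 5 ≤ n) {F G : ℤ → ℤ}
    (hF : IsGraphHom pathGraphZ pathGraphZ F) (hG : IsGraphHom pathGraphZ pathGraphZ G) {A : ℤ}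
    (hA : F A = G A) (h : ∀ a, (F a : ZMod n) = G a ∨ (cycleGraph n).Adj (F a) (G a)) (a : ℤ) :
    |F a - G a| ≤ 1 := by
  induction a using Int.inductionOn' (b := A) with
  | zero => simp [hA]
  | succ k _ ih =>
    refine abs_sub_le_one_of_eq_or_adj hn ?_ (h _)
    have := isGraphHom_pathGraphZ_pathGraphZ_iff.1 hF k
    have := isGraphHom_pathGraphZ_pathGraphZ_iff.1 hG k
    rw [abs_le] at *
    omega
  | pred k _ ih =>
    refine abs_sub_le_one_of_eq_or_adj hn ?_ (h _)
    have := isGraphHom_pathGraphZ_pathGraphZ_iff.1 hF (k - 1)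
    have := isGraphHom_pathGraphZ_pathGraphZ_iff.1 hG (k - 1)
    rw [sub_add_cancel] at *
    rw [abs_le] at *
    omega

lemma eq_of_lifts (hn : 5 ≤ n) {F G : ℤ → ℤ}
    (hF : IsGraphHom pathGraphZ pathGraphZ F) (hG : IsGraphHom pathGraphZ pathGraphZ G) {A : ℤ}
    (hA : F A = G A) (h : (Int.cast ∘ F : ℤ → ZMod n) = Int.cast ∘ G) : F = G :=
  funext fun a => eq_of_intCast_eq (congrFun h a)
    ((abs_sub_le_one_of_lifts hn hF hG hA (fun b => Or.inl (congrFun h b)) a).trans_lt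
      (by omega))

end Cycle

/-- Lift every row of the homotopy from a common point near `-∞`. Consecutive row lifts stay
within distance one, and near `+∞` they agree mod `n`, so there they coincide. -/
theorem AHomotopicZ.eventuallyEq_atTop_of_lifts {n : ℕ} (hn : 5 ≤ n) {F G : ℤ → ℤ}
    (hF : IsGraphHom pathGraphZ pathGraphZ F) (hG : IsGraphHom pathGraphZ pathGraphZ G)
    (h : AHomotopicZ (cycleGraph n) (Int.cast ∘ F) (Int.cast ∘ G)) (hbot : F =ᶠ[atBot] G) :
    F =ᶠ[atTop] G := by
  obtain ⟨u, v, Φ, hΦ, -, -, ⟨a₀, hΦbot⟩, ⟨b₀, hΦtop⟩, ⟨t₀, hΦF⟩, ⟨t₁, hΦG⟩⟩ := h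
  obtain ⟨A₀, hA₀⟩ := eventually_atBot.1 hbot
  set A := min a₀ A₀
  have hrow : ∀ t, IsGraphHom pathGraphZ (cycleGraph n) (fun a => Φ (a, t)) := fun t =>
    isGraphHom_pathGraphZ_iff.2 fun a => (isGraphHom_gridGraphZ_iff.1 hΦ a t).1
  have hrowA : ∀ t, (F A : ZMod n) = Φ (A, t) := fun t => by
    rw [hΦbot A (min_le_left _ _) t, ← hΦbot A (min_le_left _ _) t₀, hΦF t₀ le_rfl]
    rfl
  choose L hL hLA hLΦ using fun t => (hrow t).exists_lift (hrowA t)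
  have hLF : L t₀ = F := eq_of_lifts hn (hL t₀) hF (hLA t₀)
    ((hLΦ t₀).trans (funext fun a => hΦF t₀ le_rfl a))
  have hLG : L t₁ = G := eq_of_lifts hn (hL t₁) hG ((hLA t₁).trans (hA₀ A (min_le_right _ _)))
    ((hLΦ t₁).trans (funext fun a => hΦG t₁ le_rfl a))
  have hLcast : ∀ t a, (L t a : ZMod n) = Φ (a, t) := fun t a => congrFun (hLΦ t) a
  have hLstep : ∀ b, b₀ ≤ b → ∀ t, L (t + 1) b = L t b := by
    intro b hb t
    refine eq_of_intCast_eq (n := n) ?_ ((abs_sub_le_one_of_lifts hn (hL (t + 1)) (hL t)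
      ((hLA (t + 1)).trans (hLA t).symm) (fun a => ?_) b).trans_lt (by omega))
    · rw [hLcast, hLcast, hΦtop b hb, hΦtop b hb]
    · rw [hLcast, hLcast]
      exact ((isGraphHom_gridGraphZ_iff.1 hΦ a t).2).imp Eq.symm (SimpleGraph.adj_symm _)
  refine eventually_atTop.2 ⟨b₀, fun b hb => ?_⟩
  have hconst : ∀ t, L t b = L t₀ b := fun t => by
    induction t using Int.inductionOn' (b := t₀) with
    | zero => rfl
    | succ k _ ih => rw [hLstep b hb, ih]
    | pred k _ ih => rw [← ih, ← hLstep b hb (k - 1), sub_add_cancel]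
  rw [← hLF, ← hLG, hconst t₁]

section Gamma

variable (k : ℤ)

lemma isGraphHom_gammaLift : IsGraphHom pathGraphZ pathGraphZ (gammaLift k) := by
  refine isGraphHom_pathGraphZ_pathGraphZ_iff.2 fun a => ?_
  rcases le_or_gt 0 k with hk | hk
  · simp only [gammaLift, abs_of_nonneg hk]
    split_ifs <;> omega
  · simp only [gammaLift, abs_of_neg hk]
    split_ifs <;> omega

lemma gammaLift_of_nonpos {i : ℤ} (hi : i ≤ 0) : gammaLift k i = 0 := if_pos hi

lemma gammaLift_of_le {i : ℤ} (hi : 5 * |k| ≤ i) : gammaLift k i = 5 * k := by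
  rcases le_or_gt 0 k with hk | hk
  · rw [abs_of_nonneg hk] at hi
    simp only [gammaLift, abs_of_nonneg hk]
    split_ifs <;> omega
  · rw [abs_of_neg hk] at hi
    simp only [gammaLift, abs_of_neg hk]
    split_ifs <;> omega

lemma gammaC5_eq_comp : gammaC5 k = Int.cast ∘ gammaLift k := by
  funext i
  have h5 : ((5 * k : ℤ) : ZMod 5) = 0 := by simp [show (5 : ZMod 5) = 0 from rfl]
  rcases le_or_gt 0 k with hk | hk
  · simp only [gammaC5, gammaLift, if_pos hk, abs_of_nonneg hk, Function.comp_apply]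
    split_ifs <;> simp [h5]
  · simp only [gammaC5, gammaLift, if_neg hk.not_ge, abs_of_neg hk, mul_neg,
      Function.comp_apply]
    split_ifs <;> simp [h5]

lemma eventually_gammaLift_atBot : ∀ᶠ a in atBot, gammaLift k a = 0 :=
  eventually_atBot.2 ⟨0, fun _ => gammaLift_of_nonpos k⟩

lemma eventually_gammaLift_atTop : ∀ᶠ a in atTop, gammaLift k a = 5 * k :=
  eventually_atTop.2 ⟨5 * |k|, fun _ => gammaLift_of_le k⟩

end Gamma

lemma aHomotopicZ_concatZ_gammaC5 (n m : ℤ) :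
    AHomotopicZ C5 (concatZ (gammaC5 n) (gammaC5 m) 0 (5 * |m|)) (gammaC5 (n + m)) := by
  have hshift : gammaC5 n = Int.cast ∘ fun a => gammaLift n a + 5 * m := by
    rw [gammaC5_eq_comp]
    funext a
    simp [show (5 : ZMod 5) = 0 from rfl]
  rw [hshift, gammaC5_eq_comp, gammaC5_eq_comp, ← comp_concatZ]
  refine AHomotopicZ.map isGraphHom_intCast_cycleGraph (aHomotopicZ_pathGraphZ (u := 0)
    (v := 5 * (n + m)) (IsGraphHom.concatZ ?_ (isGraphHom_gammaLift m) ?_)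
    (isGraphHom_gammaLift _) ?_ ?_)
  · refine isGraphHom_pathGraphZ_pathGraphZ_iff.2 fun a => ?_
    have := isGraphHom_pathGraphZ_pathGraphZ_iff.1 (isGraphHom_gammaLift n) a
    omega
  · rw [gammaLift_of_nonpos n le_rfl, gammaLift_of_le m le_rfl, zero_add]
  · refine eventually_atBot.2 ⟨-1 - 5 * |m|, fun a ha => ?_⟩
    have := abs_nonneg m
    simp only [concatZ, if_neg (by omega : ¬ 0 ≤ a)]
    exact ⟨gammaLift_of_nonpos m (by omega), gammaLift_of_nonpos _ (by omega)⟩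
  · refine eventually_atTop.2 ⟨5 * |n| + 5 * |n + m|, fun a ha => ?_⟩
    have := abs_nonneg n
    have := abs_nonneg (n + m)
    simp only [concatZ, if_pos (by omega : 0 ≤ a), add_zero]
    rw [gammaLift_of_le n (by omega), gammaLift_of_le (n + m) (by omega)]
    exact ⟨by ring, rfl⟩

lemma exists_aHomotopicZ_gammaC5 {f : ℤ → ZMod 5} (hf : IsLoopAt C5 0 f) :
    ∃ k : ℤ, AHomotopicZ C5 f (gammaC5 k) := by
  obtain ⟨F, k, hF, rfl, hbot, htop⟩ := hf.exists_lift (n := 5) (by norm_num)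
  refine ⟨k, ?_⟩
  rw [gammaC5_eq_comp]
  exact AHomotopicZ.map isGraphHom_intCast_cycleGraph (aHomotopicZ_pathGraphZ hF
    (isGraphHom_gammaLift k) (hbot.and (eventually_gammaLift_atBot k))
    (htop.and (eventually_gammaLift_atTop k)))

lemma eq_of_aHomotopicZ_gammaC5 {n m : ℤ} (h : AHomotopicZ C5 (gammaC5 n) (gammaC5 m)) :
    n = m := by
  rw [gammaC5_eq_comp, gammaC5_eq_comp] at h
  have hbot : gammaLift n =ᶠ[atBot] gammaLift m :=
    ((eventually_gammaLift_atBot n).and (eventually_gammaLift_atBot m)).mono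
      fun _ h => h.1.trans h.2.symm
  have htop := (h.eventuallyEq_atTop_of_lifts le_rfl (isGraphHom_gammaLift n)
    (isGraphHom_gammaLift m) hbot).and
    ((eventually_gammaLift_atTop n).and (eventually_gammaLift_atTop m))
  obtain ⟨a, ha, han, ham⟩ := htop.exists
  omega

/-- The A-homotopy fundamental group of `C₅` is infinite cyclic: `n ↦ [γₙ]`
is a group homomorphism (concatenation corresponds to addition), surjective
(every based loop is A-homotopic to some `γₙ`), and injective
(`γₙ ∼ γₘ` forces `n = m`). -/
theorem fundamental_group_C5_int :
    (∀ n m : ℤ, AHomotopicZ C5 (concatZ (gammaC5 n) (gammaC5 m) 0 (5 * |m|))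
      (gammaC5 (n + m))) ∧
    (∀ f : ℤ → ZMod 5, IsLoopAt C5 0 f → ∃ n : ℤ, AHomotopicZ C5 f (gammaC5 n)) ∧
    (∀ n m : ℤ, AHomotopicZ C5 (gammaC5 n) (gammaC5 m) → n = m) :=
  ⟨aHomotopicZ_concatZ_gammaC5, fun _ => exists_aHomotopicZ_gammaC5,
    fun _ _ => eq_of_aHomotopicZ_gammaC5⟩
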